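/- The number of distinct values taken by area(π) + bounce(π) over all Dyck paths π of semilength n equals g(n) + 1, where g(0)=0 and g(n) = max_{1≤k≤n} [(k−1)(n−k) + g(n−k)]. -/

import Mathlib

/-- A Dyck path of semilength `n`, encoded as a list of steps
(`true` = north, `false` = east), staying weakly above the diagonal. -/
def IsDyck (n : ℕ) (w : List Bool) : Prop :=
  w.length = 2 * n ∧ w.count true = n ∧
    ∀ k, (w.take k).count false ≤ (w.take k).count true

/-- The area of a Dyck path: the number of whole unit cells between the
path and the diagonal (on each north step, the current number of east
steps is subtracted from the current number of north steps). -/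
def area (w : List Bool) : ℕ :=
  (w.foldl
    (fun (p : ℕ × ℕ × ℕ) s =>
      if s then (p.1 + (p.2.1 - p.2.2), p.2.1 + 1, p.2.2)
      else (p.1, p.2.1, p.2.2 + 1)) (0, 0, 0)).1

/-- `hgt w b` is the number of north steps of `w` preceding its `(b+1)`-st
east step, i.e. the height at which the bounce path heading north along
the line `x = b` meets an east step of `w`. -/
def hgt : List Bool → ℕ → ℕ
  | [], _ => 0
  | true :: w, b => hgt w b + 1
  | false :: _, 0 => 0
  | false :: w, b + 1 => hgt w b

/-- The `i`-th bounce point (a height on the diagonal) of a Dyck path. -/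
def bpt (w : List Bool) (i : ℕ) : ℕ := (hgt w)^[i] 0

/-- The bounce statistic of a Dyck path of semilength `n`:
`∑ (n - b_i)` over the successive bounce points `b_i`, `i ≥ 1`
(once the bounce path reaches `n` the terms vanish). -/
def bounce (n : ℕ) (w : List Bool) : ℕ :=
  ∑ i ∈ Finset.range n, (n - bpt w (i + 1))

/-- The Dyck path `N^{α₁}E^{α₁} ⋯ N^{α_ℓ}E^{α_ℓ}` of a composition `α`. -/
def pComp (α : List ℕ) : List Bool :=
  α.foldr (fun a acc => List.replicate a true ++ List.replicate a false ++ acc) []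

/-- `g 0 = 0` and `g n = max_{1 ≤ k ≤ n} ((k-1)(n-k) + g (n-k))`
(below, `k = j + 1` with `j` ranging over `0, …, n-1`). -/
def g : ℕ → ℕ
  | 0 => 0
  | n + 1 => (Finset.range (n + 1)).sup (fun j => j * (n - j) + g (n - j))
decreasing_by
  omega

namespace Aux

def C (n : ℕ) : ℕ := ∑ i ∈ Finset.range n, i

lemma C_add (a b : ℕ) : C (a + b) = C a + C b + a * b := by
  unfold C
  rw [Finset.range_eq_Ico, ← Finset.sum_Ico_consecutive _ (Nat.zero_le a) (Nat.le_add_right a b),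
    Finset.sum_Ico_eq_sum_range, Finset.sum_Ico_eq_sum_range]
  simp only [Nat.sub_zero, Nat.zero_add, Nat.add_sub_cancel_left]
  rw [Finset.sum_add_distrib]
  simp [mul_comm]
  ring

lemma C_reflect (t : ℕ) : ∑ j ∈ Finset.range t, (t - 1 - j) = C t := by
  unfold C
  exact Finset.sum_range_reflect (fun j => j) t

lemma C_succ (t : ℕ) : C (t+1) = C t + t := Finset.sum_range_succ _ _

lemma count_tf (l : List Bool) : l.count true + l.count false = l.length := by
  induction l with
  | nil => simp
  | cons a l ih => cases a <;> simp [List.count_cons] <;> omega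

lemma hgt_cons_true (w : List Bool) (b : ℕ) : hgt (true :: w) b = hgt w b + 1 := rfl
lemma hgt_cons_false_zero (w : List Bool) : hgt (false :: w) 0 = 0 := rfl
lemma hgt_cons_false_succ (w : List Bool) (b : ℕ) : hgt (false :: w) (b+1) = hgt w b := rfl

lemma hgt_le_succ (w : List Bool) : ∀ b, hgt w b ≤ hgt w (b+1) := by
  induction w with
  | nil => intro b; simp [hgt]
  | cons a w ih =>
    intro b
    cases a
    · cases b with
      | zero => rw [hgt_cons_false_zero]; exact Nat.zero_le _
      | succ b => rw [hgt_cons_false_succ, hgt_cons_false_succ]; exact ih b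
    · rw [hgt_cons_true, hgt_cons_true]; exact Nat.succ_le_succ (ih b)

lemma hgt_monotone (w : List Bool) : Monotone (hgt w) :=
  monotone_nat_of_le_succ (hgt_le_succ w)

lemma hgt_le_count (w : List Bool) : ∀ b, hgt w b ≤ w.count true := by
  induction w with
  | nil => intro b; simp [hgt]
  | cons a w ih =>
    intro b
    cases a
    · cases b with
      | zero => rw [hgt_cons_false_zero]; exact Nat.zero_le _
      | succ b => rw [hgt_cons_false_succ]; simp [List.count_cons]; exact le_trans (ih b) (by omega)
    · rw [hgt_cons_true]; simp [List.count_cons]; exact ih b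

lemma hgt_eq_count (w : List Bool) : ∀ b, w.count false ≤ b → hgt w b = w.count true := by
  induction w with
  | nil => intro b _; simp [hgt]
  | cons a w ih =>
    intro b hb
    cases a
    · simp [List.count_cons] at hb ⊢
      cases b with
      | zero => omega
      | succ b => rw [hgt_cons_false_succ]; exact ih b (by omega)
    · simp [List.count_cons] at hb ⊢
      rw [hgt_cons_true, ih b hb]

lemma hgt_ge_aux (w : List Bool) : ∀ c b, (∀ k, (w.take k).count false ≤ c + (w.take k).count true) →
    b + 1 ≤ w.count false → b + 1 ≤ c + hgt w b := by
  induction w with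
  | nil => intro c b _ hb; simp at hb
  | cons a w ih =>
    intro c b hbal hb
    cases a
    · cases b with
      | zero =>
        have := hbal 1
        simp [List.count_cons] at this ⊢
        rw [hgt_cons_false_zero]; omega
      | succ b =>
        rw [hgt_cons_false_succ]
        have h1 : ∀ k, (w.take k).count false ≤ (c - 1) + (w.take k).count true := by
          intro k
          have h0 := hbal 1
          have := hbal (k+1)
          simp [List.count_cons] at h0 this
          omega
        have h2 : b + 1 ≤ w.count false := by
          simp [List.count_cons] at hb; omega
        have h0 := hbal 1
        simp [List.count_cons] at h0
        have := ih (c-1) b h1 h2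
        omega
    · rw [hgt_cons_true]
      have h1 : ∀ k, (w.take k).count false ≤ (c + 1) + (w.take k).count true := by
        intro k
        have := hbal (k+1)
        simp [List.count_cons] at this
        omega
      have h2 : b + 1 ≤ w.count false := by simp [List.count_cons] at hb; omega
      have := ih (c+1) b h1 h2
      omega

def areaSpec : List Bool → ℕ → ℕ → ℕ
  | [], _, _ => 0
  | true :: w, N, E => (N - E) + areaSpec w (N+1) E
  | false :: w, N, E => areaSpec w N (E+1)

lemma foldl_area (w : List Bool) : ∀ a N E,
    (w.foldl (fun (p : ℕ × ℕ × ℕ) s =>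
      if s then (p.1 + (p.2.1 - p.2.2), p.2.1 + 1, p.2.2)
      else (p.1, p.2.1, p.2.2 + 1)) (a, N, E)).1 = a + areaSpec w N E := by
  induction w with
  | nil => intro a N E; simp [areaSpec]
  | cons s w ih =>
    intro a N E
    cases s
    · simp only [List.foldl_cons, reduceIte, Bool.false_eq_true, areaSpec]
      exact ih a N (E+1)
    · simp only [List.foldl_cons, reduceIte, areaSpec]
      rw [ih]
      omega

lemma areaSpec_eq (w : List Bool) : ∀ N E,
    (∀ k, (w.take k).count false + E ≤ (w.take k).count true + N) →
    areaSpec w N E + w.count true * E + w.count true * w.count false =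
      (∑ x ∈ Finset.range (w.count false), hgt w x) + w.count true * N + C (w.count true) := by
  induction w with
  | nil => intro N E _; simp [areaSpec, C]
  | cons s w ih =>
    intro N E hbal
    cases s
    · -- false
      have hbal' : ∀ k, (w.take k).count false + (E+1) ≤ (w.take k).count true + N := by
        intro k
        have := hbal (k+1)
        simp [List.count_cons] at this
        omega
      have IH := ih N (E+1) hbal'
      simp only [areaSpec]
      have hsum : ∑ x ∈ Finset.range (w.count false + 1), hgt (false :: w) x
          = ∑ x ∈ Finset.range (w.count false), hgt w x := by
        rw [Finset.sum_range_succ']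
        simp [hgt_cons_false_succ, hgt_cons_false_zero]
      simp only [show (false :: w).count false = w.count false + 1 by simp [List.count_cons],
        show (false :: w).count true = w.count true by simp [List.count_cons]]
      rw [hsum]
      zify at IH ⊢
      linear_combination IH
    · -- true
      have hE : E ≤ N := by have := hbal 0; simpa using this
      have hbal' : ∀ k, (w.take k).count false + E ≤ (w.take k).count true + (N+1) := by
        intro k
        have := hbal (k+1)
        simp [List.count_cons] at this
        omega
      have IH := ih (N+1) E hbal'
      simp only [areaSpec]
      have hsum : ∑ x ∈ Finset.range (w.count false), hgt (true :: w) x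
          = (∑ x ∈ Finset.range (w.count false), hgt w x) + w.count false := by
        rw [show (fun x => hgt (true :: w) x) = (fun x => hgt w x + 1) from rfl]
        rw [Finset.sum_add_distrib]
        simp
      simp only [show (true :: w).count false = w.count false by simp [List.count_cons],
        show (true :: w).count true = w.count true + 1 by simp [List.count_cons]]
      rw [hsum, C_succ]
      zify [hE] at IH ⊢
      linear_combination IH

def FF (n : ℕ) (f : ℕ → ℕ) : Prop :=
  Monotone f ∧ (∀ x, x < n → x + 1 ≤ f x) ∧ (∀ x, f x ≤ n) ∧ ∀ x, n ≤ x → f x = n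

def AB (n : ℕ) (f : ℕ → ℕ) : ℕ :=
  (∑ x ∈ Finset.range n, (f x - (x+1))) + ∑ i ∈ Finset.range n, (n - f^[i+1] 0)

def shf (f : ℕ → ℕ) : ℕ → ℕ := fun x => f (x + f 0) - f 0

lemma g_succ (m : ℕ) :
    g (m+1) = (Finset.range (m + 1)).sup (fun j => j * (m - j) + g (m - j)) := by rw [g]

lemma g_zero : g 0 = 0 := by rw [g]

lemma sumIco2 (k n : ℕ) (hk : 1 ≤ k) (hkn : k ≤ n) :
    ∑ x ∈ Finset.Ico 1 k, (n - (x+1)) = C (k-1) + (k-1) * (n-k) := by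
  rw [Finset.sum_Ico_eq_sum_range]
  have h1 : ∀ j ∈ Finset.range (k-1), n - (1 + j + 1) = ((k-1) - 1 - j) + (n - k) := by
    intro j hj
    simp only [Finset.mem_range] at hj
    omega
  rw [Finset.sum_congr rfl h1, Finset.sum_add_distrib, C_reflect, Finset.sum_const,
    Finset.card_range, smul_eq_mul]

lemma sumIco1 (k : ℕ) (hk : 1 ≤ k) :
    ∑ x ∈ Finset.Ico 1 k, (k - (x+1)) = C (k-1) := by
  have := sumIco2 k k hk le_rfl
  simpa using this

lemma iter_bounds (n : ℕ) (f : ℕ → ℕ) (hf : FF n f) : ∀ i, min i n ≤ f^[i] 0 ∧ f^[i] 0 ≤ n := by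
  intro i
  induction i with
  | zero => simp
  | succ i ih =>
    obtain ⟨h1, h2⟩ := ih
    rw [Function.iterate_succ_apply']
    by_cases hb : f^[i] 0 < n
    · have h3 := hf.2.1 _ hb
      have h4 := hf.2.2.1 (f^[i] 0)
      omega
    · have hb' : f^[i] 0 = n := by omega
      rw [hb', hf.2.2.2 n le_rfl]
      omega

lemma iter_shift (f : ℕ → ℕ) (hm : Monotone f) :
    ∀ i, f^[i+1] 0 = (shf f)^[i] 0 + f 0 := by
  intro i
  induction i with
  | zero => simp
  | succ i ih =>
    rw [Function.iterate_succ_apply' f, Function.iterate_succ_apply' (shf f), ih]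
    have hge : f 0 ≤ f ((shf f)^[i] 0 + f 0) := hm (Nat.le_add_left _ _)
    show f ((shf f)^[i] 0 + f 0) = f ((shf f)^[i] 0 + f 0) - f 0 + f 0
    omega

lemma FF_shf (n : ℕ) (f : ℕ → ℕ) (hf : FF n f) (hn : 0 < n) : FF (n - f 0) (shf f) := by
  have hk1 : 1 ≤ f 0 := hf.2.1 0 hn
  have hkn : f 0 ≤ n := hf.2.2.1 0
  refine ⟨?_, ?_, ?_, ?_⟩
  · intro a b hab
    exact Nat.sub_le_sub_right (hf.1 (by omega)) _
  · intro x hx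
    have h1 := hf.2.1 (x + f 0) (by omega)
    show x + 1 ≤ f (x + f 0) - f 0
    omega
  · intro x
    have := hf.2.2.1 (x + f 0)
    show f (x + f 0) - f 0 ≤ n - f 0
    omega
  · intro x hx
    have := hf.2.2.2 (x + f 0) (by omega)
    show f (x + f 0) - f 0 = n - f 0
    omega

lemma decomp (n : ℕ) (f : ℕ → ℕ) (hf : FF n f) (hn : 0 < n) :
    AB n f = (f 0 - 1) + (n - f 0) + (∑ x ∈ Finset.Ico 1 (f 0), (f x - (x+1)))
      + AB (n - f 0) (shf f) := by
  have hk1 : 1 ≤ f 0 := hf.2.1 0 hn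
  have hkn : f 0 ≤ n := hf.2.2.1 0
  have hFF' := FF_shf n f hf hn
  have hA : ∑ x ∈ Finset.range n, (f x - (x+1))
      = ((f 0 - 1) + ∑ x ∈ Finset.Ico 1 (f 0), (f x - (x+1)))
        + ∑ j ∈ Finset.range (n - f 0), (shf f j - (j+1)) := by
    rw [Finset.range_eq_Ico, ← Finset.sum_Ico_consecutive _ (Nat.zero_le (f 0)) hkn]
    congr 1
    · rw [Finset.sum_eq_sum_Ico_succ_bot (by omega : (0:ℕ) < f 0)]
    · rw [Finset.sum_Ico_eq_sum_range]
      apply Finset.sum_congr rfl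
      intro j _
      have hmono : f 0 ≤ f (f 0 + j) := hf.1 (Nat.zero_le _)
      show f (f 0 + j) - (f 0 + j + 1) = f (j + f 0) - f 0 - (j + 1)
      rw [show j + f 0 = f 0 + j from Nat.add_comm _ _]
      omega
  have hB : ∑ i ∈ Finset.range n, (n - f^[i+1] 0)
      = (n - f 0) + ∑ i ∈ Finset.range (n - f 0), ((n - f 0) - (shf f)^[i+1] 0) := by
    obtain ⟨m, hm⟩ : ∃ m, n = m + 1 := ⟨n-1, by omega⟩
    subst hm
    rw [Finset.sum_range_succ']
    have h0 : m + 1 - f^[0+1] 0 = m + 1 - f 0 := by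
      rw [show f^[0+1] 0 = f 0 from by simp]
    rw [h0]
    have h1 : ∀ i ∈ Finset.range m, (m + 1 - f^[i+1+1] 0)
        = ((m+1) - f 0) - (shf f)^[i+1] 0 := by
      intro i _
      rw [iter_shift f hf.1 (i+1)]
      omega
    rw [Finset.sum_congr rfl h1]
    have hle : m + 1 - f 0 ≤ m := by omega
    rw [Finset.range_eq_Ico, ← Finset.sum_Ico_consecutive _ (Nat.zero_le (m + 1 - f 0)) hle,
      ← Finset.range_eq_Ico]
    have h2 : ∑ i ∈ Finset.Ico (m + 1 - f 0) m, ((m+1) - f 0 - (shf f)^[i+1] 0) = 0 := by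
      apply Finset.sum_eq_zero
      intro i hi
      simp only [Finset.mem_Ico] at hi
      have := iter_bounds (m + 1 - f 0) (shf f) hFF' (i+1)
      omega
    rw [h2]
    omega
  unfold AB
  rw [hA, hB]
  omega

lemma FF_const (m : ℕ) : FF m (fun _ => m) :=
  ⟨monotone_const, fun x hx => by show x + 1 ≤ m; omega, fun _ => le_rfl, fun _ _ => rfl⟩

lemma AB_const (m : ℕ) : AB m (fun _ => m) = C m := by
  unfold AB
  have h1 : ∑ x ∈ Finset.range m, (m - (x+1)) = C m := by
    have hc : ∀ x ∈ Finset.range m, m - (x+1) = m - 1 - x := by intro x _; omega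
    rw [Finset.sum_congr rfl hc, C_reflect]
  have h2 : ∑ i ∈ Finset.range m, (m - (fun _ => m)^[i+1] 0) = 0 := by
    apply Finset.sum_eq_zero
    intro i _
    rw [Function.iterate_succ_apply']
    simp
  rw [h1, h2]
  omega

lemma AB_zero (f : ℕ → ℕ) : AB 0 f = 0 := by simp [AB]

lemma C_split (k n : ℕ) (hk : 1 ≤ k) (hkn : k ≤ n) :
    C n = C (k-1) + C (n-k) + (n-k) + (k-1) * (n-k) + (k-1) := by
  have h := C_add (k-1) (n-k+1)
  rw [show k - 1 + (n - k + 1) = n by omega, C_succ, Nat.mul_succ] at h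
  obtain ⟨p, hp⟩ : ∃ p, p = (k-1) * (n-k) := ⟨_, rfl⟩
  rw [← hp] at h ⊢
  omega

lemma lemP : ∀ n f, FF n f → ∃ D, D ≤ g n ∧ AB n f + D = C n := by
  intro n
  induction n using Nat.strong_induction_on with
  | _ n ih =>
    intro f hf
    rcases Nat.eq_zero_or_pos n with h0 | hn
    · subst h0
      exact ⟨0, by rw [g_zero], by rw [AB_zero]; simp [C]⟩
    · have hk1 : 1 ≤ f 0 := hf.2.1 0 hn
      have hkn : f 0 ≤ n := hf.2.2.1 0
      have hFF' := FF_shf n f hf hn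
      have hABeq := decomp n f hf hn
      obtain ⟨D', hD'le, hD'eq⟩ := ih (n - f 0) (by omega) (shf f) hFF'
      have hs1lb : C (f 0 - 1) ≤ ∑ x ∈ Finset.Ico 1 (f 0), (f x - (x+1)) := by
        rw [← sumIco1 (f 0) hk1]
        apply Finset.sum_le_sum
        intro x hx
        simp only [Finset.mem_Ico] at hx
        have := hf.1 (Nat.zero_le x)
        omega
      have hs1ub : ∑ x ∈ Finset.Ico 1 (f 0), (f x - (x+1))
          ≤ C (f 0 - 1) + (f 0 - 1) * (n - f 0) := by
        have step : ∑ x ∈ Finset.Ico 1 (f 0), (f x - (x+1))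
            ≤ ∑ x ∈ Finset.Ico 1 (f 0), ((f 0 - (x+1)) + (n - f 0)) := by
          apply Finset.sum_le_sum
          intro x hx
          simp only [Finset.mem_Ico] at hx
          have := hf.2.2.1 x
          omega
        rw [Finset.sum_add_distrib, sumIco1 (f 0) hk1, Finset.sum_const, Nat.card_Ico,
          smul_eq_mul] at step
        exact step
      have hgstep : (f 0 - 1) * (n - f 0) + g (n - f 0) ≤ g n := by
        obtain ⟨m, hm⟩ : ∃ m, n = m + 1 := ⟨n-1, by omega⟩
        subst hm
        rw [g_succ]
        have hjm : f 0 - 1 ∈ Finset.range (m+1) := by simp; omega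
        have hle := Finset.le_sup (f := fun j => j * (m - j) + g (m - j)) hjm
        have hmm : m - (f 0 - 1) = m + 1 - f 0 := by omega
        rw [hmm] at hle
        exact hle
      refine ⟨(C (f 0 - 1) + (f 0 - 1) * (n - f 0) - ∑ x ∈ Finset.Ico 1 (f 0), (f x - (x+1))) + D', ?_, ?_⟩
      · obtain ⟨p, hp⟩ : ∃ p, p = (f 0 - 1) * (n - f 0) := ⟨_, rfl⟩
        rw [← hp] at hs1ub hgstep ⊢
        omega
      · rw [hABeq]
        have hCn := C_split (f 0) n hk1 hkn
        obtain ⟨p, hp⟩ : ∃ p, p = (f 0 - 1) * (n - f 0) := ⟨_, rfl⟩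
        rw [← hp] at hs1ub hCn ⊢
        omega

lemma lemQ : ∀ n d, d ≤ g n → ∃ f, FF n f ∧ AB n f + d = C n := by
  intro n
  induction n using Nat.strong_induction_on with
  | _ n ih =>
    intro d hd
    rcases Nat.eq_zero_or_pos n with h0 | hn
    · subst h0
      rw [g_zero] at hd
      refine ⟨fun _ => 0, FF_const 0, ?_⟩
      rw [AB_zero]
      simp [C]
      omega
    · obtain ⟨m, hm⟩ : ∃ m, n = m + 1 := ⟨n-1, by omega⟩
      subst hm
      rw [g_succ] at hd
      obtain ⟨j, hjmem, hjsup⟩ := Finset.exists_mem_eq_sup (Finset.range (m+1))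
        ⟨0, by simp⟩ (fun j => j * (m - j) + g (m - j))
      rw [hjsup] at hd
      have hd2 : d ≤ j * (m - j) + g (m - j) := hd
      clear hd
      rename' hd2 => hd
      have hjm : j ≤ m := by have := Finset.mem_range.mp hjmem; omega
      by_cases hcase : j * (m - j) ≤ d
      · -- deep recursion case
        obtain ⟨d', hd'⟩ : ∃ d', d = j * (m - j) + d' := ⟨d - j * (m-j), by omega⟩
        have hd'le : d' ≤ g (m - j) := by omega
        obtain ⟨f', hf'FF, hf'eq⟩ := ih (m - j) (by omega) d' hd'le
        set f : ℕ → ℕ := fun x => if x < j + 1 then j + 1 else f' (x - (j+1)) + (j+1) with hfdef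
        have hFF : FF (m+1) f := by
          refine ⟨?_, ?_, ?_, ?_⟩
          · intro a b hab
            try simp only [hfdef]
            split_ifs with h1 h2 h2
            · exact le_rfl
            · have := hf'FF.2.1
              omega
            · omega
            · have := hf'FF.1 (show a - (j+1) ≤ b - (j+1) by omega)
              omega
          · intro x hx
            try simp only [hfdef]
            split_ifs with h1
            · omega
            · rcases Nat.lt_or_ge (x - (j+1)) (m - j) with h | h
              · have := hf'FF.2.1 _ h
                omega
              · have := hf'FF.2.2.2 _ h
                omega
          · intro x
            try simp only [hfdef]
            split_ifs with h1
            · omega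
            · have := hf'FF.2.2.1 (x - (j+1))
              omega
          · intro x hx
            try simp only [hfdef]
            split_ifs with h1
            · omega
            · have := hf'FF.2.2.2 (x - (j+1)) (by omega)
              omega
        have hf0 : f 0 = j + 1 := by simp [hfdef]
        refine ⟨f, hFF, ?_⟩
        have hshf : shf f = f' := by
          funext x
          show f (x + f 0) - f 0 = f' x
          rw [hf0]
          show (if x + (j+1) < j + 1 then j + 1 else f' (x + (j+1) - (j+1)) + (j+1)) - (j+1) = f' x
          rw [if_neg (by omega)]
          simp
        have hdec := decomp (m+1) f hFF (by omega)
        rw [hf0, hshf] at hdec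
        have hs1 : ∑ x ∈ Finset.Ico 1 (j+1), (f x - (x+1)) = C j := by
          have hc : ∀ x ∈ Finset.Ico 1 (j+1), f x - (x+1) = (j+1) - (x+1) := by
            intro x hx
            simp only [Finset.mem_Ico] at hx
            rw [hfdef]
            dsimp only
            rw [if_pos (by omega)]
          rw [Finset.sum_congr rfl hc]
          have := sumIco1 (j+1) (by omega)
          simpa using this
        rw [hdec, hs1]
        have hCn := C_split (j+1) (m+1) (by omega) (by omega)
        have hmj2 : m + 1 - (j + 1) = m - j := by omega
        rw [hmj2] at hCn hdec ⊢
        simp only [Nat.add_sub_cancel] at hCn ⊢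
        omega
      · -- shallow case: d < j * (m - j)
        push_neg at hcase
        have hmj : 1 ≤ m - j := by
          by_contra h
          have hz : m - j = 0 := by omega
          rw [hz] at hcase
          omega
        have hj1 : 1 ≤ j := by
          by_contra h
          have hz : j = 0 := by omega
          rw [hz] at hcase
          omega
        obtain ⟨q, r, hqr, hr⟩ : ∃ q r, (m-j) * q + r = d ∧ r < m - j :=
          ⟨d / (m-j), d % (m-j), Nat.div_add_mod d (m-j), Nat.mod_lt _ (by omega)⟩
        have hq : q + 1 ≤ j := by
          by_contra h
          push_neg at h
          have h2 : (m - j) * j ≤ (m - j) * q := Nat.mul_le_mul_left _ (by omega)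
          have h3 : j * (m - j) = (m - j) * j := Nat.mul_comm _ _
          omega
        set f : ℕ → ℕ := fun x => if x ≤ q then j + 1 else if x = q + 1 then (m+1) - r else m+1 with hfdef
        have hFF : FF (m+1) f := by
          refine ⟨?_, ?_, ?_, ?_⟩
          · intro a b hab
            try simp only [hfdef]
            split_ifs <;> omega
          · intro x hx
            try simp only [hfdef]
            split_ifs <;> omega
          · intro x
            try simp only [hfdef]
            split_ifs <;> omega
          · intro x hx
            try simp only [hfdef]
            split_ifs <;> omega
        have hf0 : f 0 = j + 1 := by simp [hfdef]
        refine ⟨f, hFF, ?_⟩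
        have hshf : shf f = fun _ => m - j := by
          funext x
          show f (x + f 0) - f 0 = m - j
          rw [hf0]
          show (if x + (j+1) ≤ q then j + 1 else if x + (j+1) = q + 1 then (m+1) - r else m+1) - (j+1) = m - j
          rw [if_neg (by omega), if_neg (by omega)]
          omega
        have hdec := decomp (m+1) f hFF (by omega)
        rw [hf0, hshf] at hdec
        rw [show m + 1 - (j+1) = m - j by omega] at hdec
        rw [AB_const] at hdec
        have hsum2 : ∑ x ∈ Finset.Ico 1 (j+1), ((m+1) - f x) = d := by
          rw [← Finset.sum_Ico_consecutive _ (show 1 ≤ q+1 by omega) (show q+1 ≤ j+1 by omega),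
            ← Finset.sum_Ico_consecutive _ (show q+1 ≤ q+2 by omega) (show q+2 ≤ j+1 by omega)]
          have e1 : ∑ x ∈ Finset.Ico 1 (q+1), ((m+1) - f x) = q * (m - j) := by
            have hc : ∀ x ∈ Finset.Ico 1 (q+1), (m+1) - f x = m - j := by
              intro x hx
              simp only [Finset.mem_Ico] at hx
              rw [hfdef]
              dsimp only
              rw [if_pos (by omega)]
              omega
            rw [Finset.sum_congr rfl hc, Finset.sum_const, Nat.card_Ico, smul_eq_mul]
            simp only [Nat.add_sub_cancel]
          have e2 : ∑ x ∈ Finset.Ico (q+1) (q+2), ((m+1) - f x) = r := by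
            rw [Nat.Ico_succ_singleton, Finset.sum_singleton, hfdef]
            dsimp only
            rw [if_neg (by omega), if_pos rfl]
            omega
          have e3 : ∑ x ∈ Finset.Ico (q+2) (j+1), ((m+1) - f x) = 0 := by
            apply Finset.sum_eq_zero
            intro x hx
            simp only [Finset.mem_Ico] at hx
            rw [hfdef]
            dsimp only
            rw [if_neg (by omega), if_neg (by omega)]
            omega
          rw [e1, e2, e3]
          have h3 : q * (m - j) = (m - j) * q := Nat.mul_comm _ _
          omega
        have hsum3 : ∑ x ∈ Finset.Ico 1 (j+1), (f x - (x+1)) + d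
            = C j + j * (m - j) := by
          have e4 : ∑ x ∈ Finset.Ico 1 (j+1), (f x - (x+1)) + ∑ x ∈ Finset.Ico 1 (j+1), ((m+1) - f x)
              = ∑ x ∈ Finset.Ico 1 (j+1), ((m+1) - (x+1)) := by
            rw [← Finset.sum_add_distrib]
            apply Finset.sum_congr rfl
            intro x hx
            simp only [Finset.mem_Ico] at hx
            have h1 : x + 1 ≤ f x := hFF.2.1 x (by omega)
            have h2 : f x ≤ m + 1 := hFF.2.2.1 x
            omega
          rw [hsum2] at e4
          rw [e4]
          have h5 := sumIco2 (j+1) (m+1) (by omega) (by omega)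
          rw [show (j+1) - 1 = j from rfl, show m + 1 - (j+1) = m - j from by omega] at h5
          exact h5
        rw [hdec]
        have hCn := C_split (j+1) (m+1) (by omega) (by omega)
        rw [show (j+1) - 1 = j from rfl, show m + 1 - (j+1) = m - j from by omega] at hCn
        simp only [Nat.add_sub_cancel]
        omega

lemma dyck_counts (n : ℕ) (w : List Bool) (hw : IsDyck n w) :
    w.count true = n ∧ w.count false = n := by
  have h1 := count_tf w
  have h2 := hw.1
  have h3 := hw.2.1
  exact ⟨h3, by omega⟩

lemma FF_hgt (n : ℕ) (w : List Bool) (hw : IsDyck n w) : FF n (hgt w) := by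
  obtain ⟨hct, hcf⟩ := dyck_counts n w hw
  refine ⟨hgt_monotone w, ?_, ?_, ?_⟩
  · intro x hx
    have hbal : ∀ k, (w.take k).count false ≤ 0 + (w.take k).count true := by
      intro k
      simpa using hw.2.2 k
    have := hgt_ge_aux w 0 x hbal (by omega)
    omega
  · intro x
    have := hgt_le_count w x
    omega
  · intro x hx
    rw [hgt_eq_count w x (by omega), hct]

lemma area_eq (n : ℕ) (w : List Bool) (hw : IsDyck n w) :
    area w = ∑ x ∈ Finset.range n, (hgt w x - (x+1)) := by
  obtain ⟨hct, hcf⟩ := dyck_counts n w hw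
  have hbal : ∀ k, (w.take k).count false + 0 ≤ (w.take k).count true + 0 := by
    intro k
    simpa using hw.2.2 k
  have E1 := areaSpec_eq w 0 0 hbal
  rw [hct, hcf] at E1
  simp only [Nat.mul_zero, Nat.add_zero, Nat.zero_add] at E1
  have E0 : area w = areaSpec w 0 0 := by
    have := foldl_area w 0 0 0
    simpa [area] using this
  have hge : ∀ x ∈ Finset.range n, x + 1 ≤ hgt w x := by
    intro x hx
    simp only [Finset.mem_range] at hx
    have hb : ∀ k, (w.take k).count false ≤ 0 + (w.take k).count true := by
      intro k; simpa using hw.2.2 k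
    have := hgt_ge_aux w 0 x hb (by omega)
    omega
  have E2 : ∑ x ∈ Finset.range n, hgt w x
      = (∑ x ∈ Finset.range n, (hgt w x - (x+1))) + (C n + n) := by
    have h1 : ∑ x ∈ Finset.range n, hgt w x
        = ∑ x ∈ Finset.range n, ((hgt w x - (x+1)) + (x+1)) := by
      apply Finset.sum_congr rfl
      intro x hx
      have := hge x hx
      omega
    rw [h1, Finset.sum_add_distrib]
    have h2 : ∑ x ∈ Finset.range n, (x+1) = C n + n := by
      rw [Finset.sum_add_distrib]
      simp [C]
    omega
  have E3 : 2 * C n + n = n * n := by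
    have h2 := Finset.sum_range_id_mul_two n
    rcases Nat.eq_zero_or_pos n with h0 | hpos
    · subst h0; simp [C]
    · obtain ⟨m, hm⟩ : ∃ m, n = m + 1 := ⟨n - 1, by omega⟩
      subst hm
      have h3 : (m+1) * (m+1) = (m+1) * m + (m+1) := by ring
      have h4 : (m + 1 - 1) = m := rfl
      rw [h4] at h2
      have h5 : (∑ i ∈ Finset.range (m+1), i) = C (m+1) := rfl
      rw [h5] at h2
      omega
  omega

lemma dyck_AB (n : ℕ) (w : List Bool) (hw : IsDyck n w) :
    area w + bounce n w = AB n (hgt w) := by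
  rw [area_eq n w hw]
  simp [AB, bounce, bpt]

lemma hgt_replicate_true_append (a : ℕ) (v : List Bool) (b : ℕ) :
    hgt (List.replicate a true ++ v) b = a + hgt v b := by
  induction a with
  | zero => simp
  | succ a ih =>
    rw [List.replicate_succ, List.cons_append, hgt_cons_true, ih]
    omega

def bld (f : ℕ → ℕ) : ℕ → ℕ → ℕ → List Bool
  | 0, _, _ => []
  | fuel+1, h, x => List.replicate (f x - h) true ++ false :: bld f fuel (f x) (x+1)

lemma bld_count_false (f : ℕ → ℕ) : ∀ fuel h x, (bld f fuel h x).count false = fuel := by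
  intro fuel
  induction fuel with
  | zero => intro h x; simp [bld]
  | succ fuel ih =>
    intro h x
    simp [bld, List.count_append, List.count_cons, List.count_replicate, ih]

lemma bld_count_true (n : ℕ) (f : ℕ → ℕ) (hf : FF n f) :
    ∀ fuel x h, x + fuel = n → h ≤ f x → 1 ≤ fuel → (bld f fuel h x).count true = n - h := by
  intro fuel
  induction fuel with
  | zero => intro x h _ _ h1; omega
  | succ fuel ih =>
    intro x h hxf hhf _
    have hcount : (bld f (fuel+1) h x).count true
        = (f x - h) + (bld f fuel (f x) (x+1)).count true := by
      simp [bld, List.count_append, List.count_cons, List.count_replicate]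
    rw [hcount]
    rcases Nat.eq_zero_or_pos fuel with h0 | hpos
    · subst h0
      have h1 := hf.2.1 x (by omega)
      have h2 := hf.2.2.1 x
      simp [bld]
      omega
    · rw [ih (x+1) (f x) (by omega) (hf.1 (by omega)) hpos]
      have h2 := hf.2.2.1 x
      omega

lemma bld_prefix (n : ℕ) (f : ℕ → ℕ) (hf : FF n f) :
    ∀ fuel x h, x + fuel = n → x ≤ h → h ≤ f x →
      ∀ k, ((bld f fuel h x).take k).count false + x ≤ ((bld f fuel h x).take k).count true + h := by
  intro fuel
  induction fuel with
  | zero =>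
    intro x h _ hxh _ k
    simp [bld]
    omega
  | succ fuel ih =>
    intro x h hxf hxh hhf k
    have hx : x < n := by omega
    show ((List.replicate (f x - h) true ++ false :: bld f fuel (f x) (x+1)).take k).count false + x
      ≤ ((List.replicate (f x - h) true ++ false :: bld f fuel (f x) (x+1)).take k).count true + h
    rw [List.take_append, List.take_replicate, List.length_replicate]
    by_cases hk : k ≤ f x - h
    · have hk0 : k - (f x - h) = 0 := by omega
      rw [hk0]
      simp [List.count_replicate]
      omega
    · obtain ⟨t, ht⟩ : ∃ t, k - (f x - h) = t + 1 := ⟨k - (f x - h) - 1, by omega⟩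
      rw [ht, List.take_succ_cons]
      have IH := ih (x+1) (f x) (by omega) (hf.2.1 x hx) (hf.1 (by omega)) t
      simp only [List.count_append, List.count_cons, List.count_replicate]
      have hmin : min k (f x - h) = f x - h := by omega
      rw [hmin]
      simp
      omega

lemma bld_hgt (n : ℕ) (f : ℕ → ℕ) (hf : FF n f) :
    ∀ fuel x h b, 1 ≤ fuel → x + fuel = n → h ≤ f x →
      hgt (bld f fuel h x) b = (if x + b < n then f (x + b) else n) - h := by
  intro fuel
  induction fuel with
  | zero => intro x h b h1; omega
  | succ fuel ih =>
    intro x h b _ hxf hhf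
    show hgt (List.replicate (f x - h) true ++ false :: bld f fuel (f x) (x+1)) b = _
    rw [hgt_replicate_true_append]
    cases b with
    | zero =>
      rw [hgt_cons_false_zero]
      rw [if_pos (by omega : x + 0 < n)]
      rw [show x + 0 = x by omega]
      omega
    | succ b =>
      rw [hgt_cons_false_succ]
      rcases Nat.eq_zero_or_pos fuel with h0 | hpos
      · subst h0
        have hz : hgt (bld f 0 (f x) (x+1)) b = 0 := rfl
        rw [hz, if_neg (by omega : ¬ (x + (b+1) < n))]
        have h1 := hf.2.1 x (by omega)
        have h2 := hf.2.2.1 x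
        omega
      · rw [ih (x+1) (f x) b hpos (by omega) (hf.1 (by omega))]
        have hmono : f x ≤ f (x+1+b) := hf.1 (by omega)
        have hfxn : f x ≤ n := hf.2.2.1 x
        have hfn : f (x+1+b) ≤ n := hf.2.2.1 _
        rw [show x + (b+1) = x+1+b by omega]
        by_cases hc : x+1+b < n
        · rw [if_pos hc]
          omega
        · rw [if_neg hc]
          omega

lemma exists_dyck (n : ℕ) (f : ℕ → ℕ) (hf : FF n f) : ∃ w, IsDyck n w ∧ hgt w = f := by
  rcases Nat.eq_zero_or_pos n with h0 | hn
  · subst h0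
    refine ⟨[], ⟨by simp, by simp, fun k => by simp⟩, ?_⟩
    funext b
    have hb := hf.2.2.2 b (Nat.zero_le b)
    have : hgt [] b = 0 := rfl
    omega
  · refine ⟨bld f n 0 0, ⟨?_, ?_, ?_⟩, ?_⟩
    · have h1 := bld_count_true n f hf n 0 0 (by omega) (Nat.zero_le _) (by omega)
      have h2 := bld_count_false f n 0 0
      have h3 := count_tf (bld f n 0 0)
      omega
    · have h1 := bld_count_true n f hf n 0 0 (by omega) (Nat.zero_le _) (by omega)
      omega
    · intro k
      have := bld_prefix n f hf n 0 0 (by omega) le_rfl (Nat.zero_le _) k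
      omega
    · funext b
      have hb := bld_hgt n f hf n 0 0 b (by omega) (by omega) (Nat.zero_le _)
      simp only [Nat.zero_add, Nat.sub_zero] at hb
      rw [hb]
      by_cases hc : b < n
      · rw [if_pos hc]
      · rw [if_neg hc, hf.2.2.2 b (by omega)]

end Aux

theorem stmt9 (n : ℕ) :
    {x : ℕ | ∃ w : List Bool, IsDyck n w ∧ area w + bounce n w = x}.ncard
      = g n + 1 := by
  have hgC : g n ≤ Aux.C n := by
    obtain ⟨f, hf, he⟩ := Aux.lemQ n (g n) le_rfl
    omega
  have key : {x : ℕ | ∃ w, IsDyck n w ∧ area w + bounce n w = x}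
      = Set.Icc (Aux.C n - g n) (Aux.C n) := by
    ext x
    simp only [Set.mem_setOf_eq, Set.mem_Icc]
    constructor
    · rintro ⟨w, hw, hx⟩
      obtain ⟨D, hDle, hDeq⟩ := Aux.lemP n (hgt w) (Aux.FF_hgt n w hw)
      have hab := Aux.dyck_AB n w hw
      omega
    · rintro ⟨h1, h2⟩
      obtain ⟨f, hf, he⟩ := Aux.lemQ n (Aux.C n - x) (by omega)
      obtain ⟨w, hwD, hwh⟩ := Aux.exists_dyck n f hf
      refine ⟨w, hwD, ?_⟩
      have hab := Aux.dyck_AB n w hwD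
      rw [hwh] at hab
      omega
  rw [key]
  rw [show Set.Icc (Aux.C n - g n) (Aux.C n) = ↑(Finset.Icc (Aux.C n - g n) (Aux.C n)) from (Finset.coe_Icc _ _).symm,
    Set.ncard_coe_finset, Nat.card_Icc]
  omega
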